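/- arXiv:2011.13770 — 3 statements merged into one kernel-verified Lean document; each statement's English description precedes it below -/
import Mathlib

section
/- Let Ω be a slice-open set in W and let q ∈ Ω. Then there exists a real-connected slice-domain U with q ∈ U ⊆ Ω. -/
noncomputable section

/-- `ℝ^{2n}` as a Euclidean space. -/
abbrev V (n : ℕ) : Type := EuclideanSpace ℝ (Fin (2 * n))

/-- `End(ℝ^{2n})`: the (continuous, hence in finite dimension all) real-linear
endomorphisms of `ℝ^{2n}`; multiplication is composition. -/
abbrev EndE (n : ℕ) : Type := V n →L[ℝ] V n

/-- The set `𝔠_n` of complex structures on `ℝ^{2n}`. -/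
def CS (n : ℕ) : Set (EndE n) := {I | I * I = -1}

/-- The slice `ℂ_I = {x·id + y·I : x, y ∈ ℝ}`. -/
def CI {n : ℕ} (I : EndE n) : Set (EndE n) := {A | ∃ x y : ℝ, A = x • (1 : EndE n) + y • I}

/-- The slice `ℂ_I^d ⊆ [End(ℝ^{2n})]^d`. -/
def CId (n d : ℕ) (I : EndE n) : Set (Fin d → EndE n) := {q | ∀ ℓ, q ℓ ∈ CI I}

/-- `ℝ^d` identified with the tuples `(x₁·id, …, x_d·id)`. -/
def RealSet (n d : ℕ) : Set (Fin d → EndE n) := {q | ∀ ℓ, ∃ x : ℝ, q ℓ = x • (1 : EndE n)}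

/-- The weak slice-cone `W = ⋃_{I ∈ 𝒞} ℂ_I^d`. -/
def Wcone (n d : ℕ) (𝒞 : Set (EndE n)) : Set (Fin d → EndE n) := ⋃ I ∈ 𝒞, CId n d I

/-- `Ω` is slice-open: `Ω ⊆ W` and for every `I ∈ 𝒞`, `Ω ∩ ℂ_I^d` is open in the
Euclidean (subspace) topology of `ℂ_I^d`. -/
def SliceOpen (n d : ℕ) (𝒞 : Set (EndE n)) (Ω : Set (Fin d → EndE n)) : Prop :=
  Ω ⊆ Wcone n d 𝒞 ∧ ∀ I ∈ 𝒞, ∃ U : Set (Fin d → EndE n), IsOpen U ∧ Ω ∩ CId n d I = U ∩ CId n d I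

/-- The slice topology `τ_s`: a set is open iff its intersection with each slice `ℂ_I^d`
(`I ∈ 𝒞`) is open in the Euclidean topology of the slice. -/
def sliceTop (n d : ℕ) (𝒞 : Set (EndE n)) : TopologicalSpace (Fin d → EndE n) :=
  ⨆ I ∈ 𝒞, TopologicalSpace.coinduced (Subtype.val : CId n d I → Fin d → EndE n) inferInstance

/-- A slice-domain: a nonempty slice-open set, connected in the slice topology. -/
def SliceDomain (n d : ℕ) (𝒞 : Set (EndE n)) (Ω : Set (Fin d → EndE n)) : Prop :=
  SliceOpen n d 𝒞 Ω ∧ @IsConnected _ (sliceTop n d 𝒞) Ω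

/-- `Ω` is real-connected: `Ω ∩ ℝ^d` is connected (empty counts as connected). -/
def RealConnected (n d : ℕ) (Ω : Set (Fin d → EndE n)) : Prop :=
  IsPreconnected (Ω ∩ RealSet n d)

/-!
Take for `U` the union, over `J ∈ 𝒞`, of the points `p ∈ ℂ_J^d` with `[q, p] ⊆ Ω ∩ ℂ_J^d`.
Each piece is star-shaped about `q`, hence connected, and is relatively open in `ℂ_J^d`
because `[0, 1]` is compact. Two slices `ℂ_J^d ≠ ℂ_K^d` meet only in `ℝ^d`, so `U ∩ ℂ_K^d` is
exactly the `K`-piece as soon as the real points of `U` can be joined to `q` inside `ℝ^d`. This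
holds when `q` is real; when it is not, first replace `Ω` by `Ω \ ℝ^d`, which is still
slice-open since `ℝ^d` is closed. Then `U ∩ ℝ^d` is either empty or star-shaped about `q`.
-/
open Set Topology

section Visible

variable {E : Type*} [AddCommGroup E] [Module ℝ E]

def visibleSet (q : E) (s : Set E) : Set E := {p | segment ℝ q p ⊆ s}

variable {q p : E} {s : Set E}

lemma visibleSet_subset : visibleSet q s ⊆ s := fun p hp => hp (right_mem_segment ℝ q p)

lemma mem_visibleSet_self (hq : q ∈ s) : q ∈ visibleSet q s := by
  simpa [visibleSet, segment_same] using hq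

lemma self_mem_visibleSet_of_mem (hp : p ∈ visibleSet q s) : q ∈ visibleSet q s :=
  mem_visibleSet_self (hp (left_mem_segment ℝ q p))

lemma starConvex_visibleSet : StarConvex ℝ q (visibleSet q s) :=
  (starConvex_iff_segment_subset).2 fun _ hp _ hz =>
    ((convex_segment _ _).segment_subset (left_mem_segment ℝ _ _) hz).trans hp

variable [TopologicalSpace E] [IsTopologicalAddGroup E] [ContinuousSMul ℝ E]

/-- Tube lemma along the compact parameter interval `[0, 1]`. -/
lemma isOpen_visibleSet (hs : IsOpen s) : IsOpen (visibleSet q s) := by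
  have hvis : visibleSet q s = {p | ∀ t ∈ Icc (0 : ℝ) 1, q + t • (p - q) ∈ s} := by
    ext p
    simp only [visibleSet, segment_eq_image', image_subset_iff]
    rfl
  rw [hvis, isOpen_iff_eventually]
  intro p hp
  refine isCompact_Icc.eventually_forall_of_forall_eventually fun t ht => ?_
  have hcont : Continuous fun z : E × ℝ => q + z.2 • (z.1 - q) := by fun_prop
  exact hcont.continuousAt.eventually (hs.mem_nhds (hp t ht))

lemma exists_isOpen_visibleSet_inter_eq {O S : Set E} (hO : IsOpen O) (hS : Convex ℝ S) :
    ∃ U, IsOpen U ∧ visibleSet q (O ∩ S) = U ∩ S := by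
  by_cases hq : q ∈ S
  · refine ⟨visibleSet q O, isOpen_visibleSet hO, ?_⟩
    ext p
    simp only [visibleSet, mem_ofPred_eq, subset_inter_iff, mem_inter_iff]
    exact ⟨fun h => ⟨h.1, h.2 (right_mem_segment ℝ q p)⟩,
      fun h => ⟨h.1, hS.segment_subset hq h.2⟩⟩
  · refine ⟨∅, isOpen_empty, ?_⟩
    rw [empty_inter, eq_empty_iff_forall_notMem]
    exact fun p hp => hq (visibleSet_subset (self_mem_visibleSet_of_mem hp)).2

end Visible

/-- `ℝ[K] ≅ ℂ`, whose only square roots of `-1` are `±i`. -/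
lemma eq_or_eq_neg_of_mul_self_eq_neg_one {A : Type*} [Ring A] [Algebra ℝ A] [Nontrivial A]
    {J K : A} (hJ : J * J = -1) (hK : K * K = -1) {x y : ℝ} (h : J = x • 1 + y • K) :
    J = K ∨ J = -K := by
  set φ := Complex.liftAux K hK
  have hφJ : φ ⟨x, y⟩ = J := by
    simp [φ, Complex.liftAux_apply, Algebra.algebraMap_eq_smul_one, h]
  have hsq : (⟨x, y⟩ : ℂ) * ⟨x, y⟩ = Complex.I * Complex.I := by
    apply φ.toRingHom.injective
    simp [hφJ, hJ]
  rcases mul_self_eq_mul_self_iff.1 hsq with hI | hI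
  · left; rw [← hφJ, hI]; simp [φ]
  · right; rw [← hφJ, hI]; simp [φ]

section Slices

variable {n d : ℕ}

lemma CI_eq_span (I : EndE n) : CI I = Submodule.span ℝ {1, I} := by
  ext a
  simp only [CI, mem_ofPred_eq, SetLike.mem_coe, Submodule.mem_span_pair, eq_comm]

lemma CId_eq_pi (I : EndE n) : CId n d I = univ.pi fun _ => CI I := by
  ext p
  simp [CId]

lemma RealSet_eq_pi :
    RealSet n d = univ.pi fun _ => (Submodule.span ℝ {(1 : EndE n)} : Set _) := by
  ext p
  simp [RealSet, Submodule.mem_span_singleton, eq_comm]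

lemma convex_CId (I : EndE n) : Convex ℝ (CId n d I) := by
  rw [CId_eq_pi, CI_eq_span]
  exact convex_pi fun _ _ => Submodule.convex _

lemma convex_RealSet : Convex ℝ (RealSet n d) := by
  rw [RealSet_eq_pi]
  exact convex_pi fun _ _ => Submodule.convex _

lemma isClosed_RealSet : IsClosed (RealSet n d) := by
  rw [RealSet_eq_pi]
  exact isClosed_set_pi fun _ _ => Submodule.closed_of_finiteDimensional _

lemma RealSet_subset_CId (I : EndE n) : RealSet n d ⊆ CId n d I := by
  intro p hp ℓ
  obtain ⟨x, hx⟩ := hp ℓ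
  exact ⟨x, 0, by rw [hx, zero_smul ℝ I, add_zero]⟩

lemma CId_neg (I : EndE n) : CId n d (-I) = CId n d I := by
  have hCI : CI (-I) = CI I := by
    ext a
    constructor <;> rintro ⟨x, y, rfl⟩ <;> exact ⟨x, -y, by module⟩
  simp only [CId, hCI]

lemma exists_eq_smul_one_of_mem_CI_inter {J K : EndE n} (hJ : J ∈ CS n) (hK : K ∈ CS n)
    (hJK : J ≠ K) (hJK' : J ≠ -K) {a : EndE n} (ha : a ∈ CI J ∩ CI K) :
    ∃ x : ℝ, a = x • 1 := by
  obtain ⟨⟨x, y, rfl⟩, x', y', ha⟩ := ha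
  rcases subsingleton_or_nontrivial (EndE n) with _ | _
  · exact ⟨0, Subsingleton.elim _ _⟩
  by_cases hy : y = 0
  · exact ⟨x, by rw [hy, zero_smul ℝ J, add_zero]⟩
  have hJ' : J = ((x' - x) / y) • 1 + (y' / y) • K := by
    have hyJ : y • J = (x' - x) • 1 + y' • K := by linear_combination (norm := module) ha
    rw [← inv_smul_smul₀ hy J, hyJ]
    match_scalars <;> field_simp
  rcases eq_or_eq_neg_of_mul_self_eq_neg_one hJ hK hJ' with h | h
  exacts [absurd h hJK, absurd h hJK']

lemma CId_eq_or_inter_subset_RealSet {J K : EndE n} (hJ : J ∈ CS n) (hK : K ∈ CS n) :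
    CId n d J = CId n d K ∨ CId n d J ∩ CId n d K ⊆ RealSet n d := by
  by_cases hJK : J = K
  · exact Or.inl (by rw [hJK])
  by_cases hJK' : J = -K
  · exact Or.inl (by rw [hJK', CId_neg])
  exact Or.inr fun p hp ℓ =>
    exists_eq_smul_one_of_mem_CI_inter hJ hK hJK hJK' ⟨hp.1 ℓ, hp.2 ℓ⟩

end Slices

section SliceTopology

variable {n d : ℕ} {𝒞 : Set (EndE n)}

lemma continuous_subtypeVal_sliceTop {I : EndE n} (hI : I ∈ 𝒞) :
    Continuous[_, sliceTop n d 𝒞] (Subtype.val : CId n d I → Fin d → EndE n) :=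
  continuous_iff_coinduced_le.2 <|
    le_iSup₂ (f := fun J (_ : J ∈ 𝒞) => TopologicalSpace.coinduced
      (Subtype.val : CId n d J → Fin d → EndE n) inferInstance) I hI

lemma isPreconnected_sliceTop_of_subset_CId {I : EndE n} (hI : I ∈ 𝒞)
    {s : Set (Fin d → EndE n)} (hsI : s ⊆ CId n d I) (hs : IsPreconnected s) :
    @IsPreconnected _ (sliceTop n d 𝒞) s := by
  have hval : Subtype.val '' (Subtype.val ⁻¹' s : Set (CId n d I)) = s := by
    rw [Subtype.image_preimage_coe, inter_eq_right.2 hsI]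
  have hpre : IsPreconnected (Subtype.val ⁻¹' s : Set (CId n d I)) := by
    rwa [← Topology.IsInducing.subtypeVal.isPreconnected_image, hval]
  rw [← hval]
  exact @IsPreconnected.image _ _ _ (sliceTop n d 𝒞) _ hpre _
    (@Continuous.continuousOn _ _ _ (sliceTop n d 𝒞) _ _ (continuous_subtypeVal_sliceTop hI))

lemma SliceOpen.diff_RealSet {Ω : Set (Fin d → EndE n)} (hΩ : SliceOpen n d 𝒞 Ω) :
    SliceOpen n d 𝒞 (Ω \ RealSet n d) := by
  refine ⟨sdiff_subset.trans hΩ.1, fun I hI => ?_⟩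
  obtain ⟨U, hU, hΩU⟩ := hΩ.2 I hI
  refine ⟨U \ RealSet n d, hU.sdiff isClosed_RealSet, ?_⟩
  rw [← inter_sdiff_right_comm, hΩU, inter_sdiff_right_comm]

end SliceTopology

section StarDomain

variable {n d : ℕ} {𝒞 : Set (EndE n)} {Ω : Set (Fin d → EndE n)} {q : Fin d → EndE n}

def starDomain (𝒞 : Set (EndE n)) (Ω : Set (Fin d → EndE n)) (q : Fin d → EndE n) :
    Set (Fin d → EndE n) :=
  ⋃ J ∈ 𝒞, visibleSet q (Ω ∩ CId n d J)

lemma starDomain_subset : starDomain 𝒞 Ω q ⊆ Ω :=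
  iUnion₂_subset fun _ _ => visibleSet_subset.trans inter_subset_left

lemma mem_starDomain (hΩ : Ω ⊆ Wcone n d 𝒞) (hq : q ∈ Ω) : q ∈ starDomain 𝒞 Ω q := by
  obtain ⟨I, hI, hqI⟩ := mem_iUnion₂.1 (hΩ hq)
  exact mem_iUnion₂.2 ⟨I, hI, mem_visibleSet_self ⟨hq, hqI⟩⟩

lemma starConvex_starDomain : StarConvex ℝ q (starDomain 𝒞 Ω q) :=
  starConvex_iUnion₂ fun _ _ => starConvex_visibleSet

/-- A piece seen inside another slice `ℂ_J^d` meets `ℂ_K^d` only in real points `p`; then `q` is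
real too, so `[q, p] ⊆ ℝ^d ⊆ ℂ_K^d`. -/
lemma starDomain_inter_CId (hcs : 𝒞 ⊆ CS n)
    (hreal : (Ω ∩ RealSet n d).Nonempty → q ∈ RealSet n d) {K : EndE n} (hK : K ∈ 𝒞) :
    starDomain 𝒞 Ω q ∩ CId n d K = visibleSet q (Ω ∩ CId n d K) := by
  refine Subset.antisymm (fun p ⟨hpU, hpK⟩ => ?_) fun p hp =>
    ⟨mem_iUnion₂.2 ⟨K, hK, hp⟩, (visibleSet_subset hp).2⟩
  obtain ⟨J, hJ, hpJ⟩ := mem_iUnion₂.1 hpU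
  rcases CId_eq_or_inter_subset_RealSet (d := d) (hcs hJ) (hcs hK) with hJK | hJK
  · rwa [← hJK]
  have hpR : p ∈ RealSet n d := hJK ⟨(visibleSet_subset hpJ).2, hpK⟩
  have hqR := hreal ⟨p, (visibleSet_subset hpJ).1, hpR⟩
  exact subset_inter (hpJ.trans inter_subset_left)
    ((convex_RealSet.segment_subset hqR hpR).trans (RealSet_subset_CId K))

lemma sliceOpen_starDomain (hcs : 𝒞 ⊆ CS n) (hΩ : SliceOpen n d 𝒞 Ω)
    (hreal : (Ω ∩ RealSet n d).Nonempty → q ∈ RealSet n d) :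
    SliceOpen n d 𝒞 (starDomain 𝒞 Ω q) := by
  refine ⟨starDomain_subset.trans hΩ.1, fun K hK => ?_⟩
  obtain ⟨U, hU, hΩU⟩ := hΩ.2 K hK
  obtain ⟨V, hV, hVeq⟩ : ∃ V, IsOpen V ∧ visibleSet q (U ∩ CId n d K) = V ∩ CId n d K :=
    exists_isOpen_visibleSet_inter_eq hU (convex_CId K)
  refine ⟨V, hV, ?_⟩
  rw [starDomain_inter_CId hcs hreal hK, hΩU, hVeq]

lemma isPreconnected_starDomain : @IsPreconnected _ (sliceTop n d 𝒞) (starDomain 𝒞 Ω q) := by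
  refine @isPreconnected_of_forall _ (sliceTop n d 𝒞) _ q fun p hp => ?_
  obtain ⟨J, hJ, hpJ⟩ := mem_iUnion₂.1 hp
  refine ⟨_, subset_iUnion₂ (s := fun J _ => visibleSet q (Ω ∩ CId n d J)) J hJ,
    self_mem_visibleSet_of_mem hpJ, hpJ, ?_⟩
  have hpath := starConvex_visibleSet.isPathConnected (self_mem_visibleSet_of_mem hpJ)
  exact isPreconnected_sliceTop_of_subset_CId hJ (visibleSet_subset.trans inter_subset_right)
    hpath.isConnected.isPreconnected

lemma realConnected_starDomain (hreal : (Ω ∩ RealSet n d).Nonempty → q ∈ RealSet n d) :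
    RealConnected n d (starDomain 𝒞 Ω q) := by
  rcases (starDomain 𝒞 Ω q ∩ RealSet n d).eq_empty_or_nonempty with h | ⟨p, hpU, hpR⟩
  · rw [RealConnected, h]
    exact isPreconnected_empty
  have hqR := hreal ⟨p, starDomain_subset hpU, hpR⟩
  obtain ⟨J, hJ, hpJ⟩ := mem_iUnion₂.1 hpU
  have hqU : q ∈ starDomain 𝒞 Ω q := mem_iUnion₂.2 ⟨J, hJ, self_mem_visibleSet_of_mem hpJ⟩
  have hstar : StarConvex ℝ q (starDomain 𝒞 Ω q ∩ RealSet n d) :=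
    starConvex_starDomain.inter (convex_RealSet.starConvex hqR)
  have hpath : IsPathConnected (starDomain 𝒞 Ω q ∩ RealSet n d) :=
    StarConvex.isPathConnected (E := Fin d → EndE n) hstar (mem_inter hqU hqR)
  exact hpath.isConnected.isPreconnected

end StarDomain

theorem exists_realConnected_sliceDomain_general (n d : ℕ)
    (𝒞 : Set (EndE n)) (hcs : 𝒞 ⊆ CS n)
    (Ω : Set (Fin d → EndE n)) (hΩ : SliceOpen n d 𝒞 Ω)
    (q : Fin d → EndE n) (hq : q ∈ Ω) :
    ∃ U : Set (Fin d → EndE n),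
      SliceDomain n d 𝒞 U ∧ RealConnected n d U ∧ q ∈ U ∧ U ⊆ Ω := by
  obtain ⟨Ω', hΩ', hqΩ', hΩ'Ω, hreal⟩ : ∃ Ω', SliceOpen n d 𝒞 Ω' ∧ q ∈ Ω' ∧ Ω' ⊆ Ω ∧
      ((Ω' ∩ RealSet n d).Nonempty → q ∈ RealSet n d) := by
    by_cases hqR : q ∈ RealSet n d
    · exact ⟨Ω, hΩ, hq, subset_rfl, fun _ => hqR⟩
    · exact ⟨Ω \ RealSet n d, hΩ.diff_RealSet, ⟨hq, hqR⟩, sdiff_subset,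
        fun ⟨_, hp, hpR⟩ => absurd hpR hp.2⟩
  have hqU := mem_starDomain hΩ'.1 hqΩ'
  exact ⟨starDomain 𝒞 Ω' q,
    ⟨sliceOpen_starDomain hcs hΩ' hreal, ⟨q, hqU⟩, isPreconnected_starDomain⟩,
    realConnected_starDomain hreal, hqU, starDomain_subset.trans hΩ'Ω⟩

/-- Every point of a slice-open set lies in a real-connected slice-domain contained in it. -/
theorem exists_realConnected_sliceDomain (n d : ℕ) (hn : 1 ≤ n) (hd : 1 ≤ d)
    (𝒞 : Set (EndE n)) (h𝒞 : 𝒞.Nonempty) (hsym : ∀ I ∈ 𝒞, -I ∈ 𝒞) (hcs : 𝒞 ⊆ CS n)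
    (Ω : Set (Fin d → EndE n)) (hΩ : SliceOpen n d 𝒞 Ω)
    (q : Fin d → EndE n) (hq : q ∈ Ω) :
    ∃ U : Set (Fin d → EndE n),
      SliceDomain n d 𝒞 U ∧ RealConnected n d U ∧ q ∈ U ∧ U ⊆ Ω :=
  exists_realConnected_sliceDomain_general n d 𝒞 hcs Ω hΩ q hq
end
end

section
/- Let Ω be a real-connected slice-domain in W with Ω ∩ ℝ^d = ∅. Then there exists I ∈ 𝒞 such that Ω ⊆ ℂ_I^d. -/
noncomputable section

/-!
Two slices `ℂ_I` and `ℂ_J` with `J ≠ ±I` meet only in the reals, because a complex structure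
`I = a + bJ` forces `a = 0`, `b = ±1`. So a slice-open `Ω` without real points meets `ℂ_I^d`
only through the slices `ℂ_{±I}^d = ℂ_I^d`, which makes `Ω ∩ ℂ_I^d` and `Ω \ ℂ_I^d` both
slice-open; connectedness of `Ω` then puts `Ω` inside a slice `ℂ_I^d` that it meets.
-/

open scoped Topology

section ComplexStructure

variable {A : Type*} [Ring A] [Algebra ℝ A]

theorem smul_one_add_smul_mul_self {J : A} (hJ : J * J = -1) (a b : ℝ) :
    (a • (1 : A) + b • J) * (a • 1 + b • J) = (a * a - b * b) • (1 : A) + (2 * a * b) • J := by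
  simp only [mul_add, add_mul, smul_mul_smul_comm, one_mul, mul_one, hJ]
  module

theorem eq_zero_and_eq_zero_of_smul_one_add_smul_eq_zero [Nontrivial A] {J : A}
    (hJ : J * J = -1) {x y : ℝ} (h : x • (1 : A) + y • J = 0) : x = 0 ∧ y = 0 := by
  have hnorm : (x • (1 : A) + y • J) * (x • 1 - y • J) = (x * x + y * y) • (1 : A) := by
    simp only [mul_sub, add_mul, smul_mul_smul_comm, one_mul, mul_one, hJ]
    module
  rw [h, zero_mul, eq_comm, smul_eq_zero] at hnorm
  have hsq : x * x + y * y = 0 := hnorm.resolve_right one_ne_zero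
  constructor <;> nlinarith

theorem eq_or_eq_neg_of_eq_smul_one_add_smul [Nontrivial A] {I J : A} (hI : I * I = -1)
    (hJ : J * J = -1) {a b : ℝ} (h : I = a • (1 : A) + b • J) : I = J ∨ I = -J := by
  have hsq : (a * a - b * b + 1) • (1 : A) + (2 * a * b) • J = 0 := by
    have hII : I * I = _ := congrArg (fun X => X * X) h
    rw [hI, smul_one_add_smul_mul_self hJ] at hII
    linear_combination (norm := module) -hII
  obtain ⟨hre, hab⟩ := eq_zero_and_eq_zero_of_smul_one_add_smul_eq_zero hJ hsq
  have ha : a = 0 := by nlinarith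
  have hb : (b - 1) * (b + 1) = 0 := by subst ha; linarith
  rcases mul_eq_zero.mp hb with hb | hb
  · left; rw [h, ha, show b = 1 by linarith]; module
  · right; rw [h, ha, show b = -1 by linarith]; module

end ComplexStructure

theorem CI_neg {n : ℕ} (I : EndE n) : CI (-I) = CI I := by
  ext A
  constructor <;> rintro ⟨x, y, rfl⟩ <;> exact ⟨x, -y, by module⟩

theorem exists_eq_smul_one_of_mem_CI_of_mem_CI {n : ℕ} {I J : EndE n} (hI : I ∈ CS n)
    (hJ : J ∈ CS n) (hIJ : I ≠ J) (hIJ' : I ≠ -J) {A : EndE n} (hAI : A ∈ CI I)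
    (hAJ : A ∈ CI J) : ∃ r : ℝ, A = r • (1 : EndE n) := by
  obtain ⟨x, y, rfl⟩ := hAI
  obtain ⟨x', y', hA⟩ := hAJ
  by_cases hy : y = 0
  · exact ⟨x, by subst hy; module⟩
  have : Nontrivial (EndE n) := nontrivial_of_ne I J hIJ
  have hIspan : I = ((x' - x) / y) • (1 : EndE n) + (y' / y) • J := by
    apply smul_right_injective (EndE n) hy
    simp only [smul_add, smul_smul, mul_div_cancel₀ _ hy]
    linear_combination (norm := module) hA
  rcases eq_or_eq_neg_of_eq_smul_one_add_smul hI hJ hIspan with h | h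
  exacts [absurd h hIJ, absurd h hIJ']

theorem CId_eq_or_inter_subset_realSet (n d : ℕ) {I J : EndE n} (hI : I ∈ CS n)
    (hJ : J ∈ CS n) : CId n d J = CId n d I ∨ CId n d I ∩ CId n d J ⊆ RealSet n d := by
  by_cases hJI : J = I
  · exact .inl (hJI ▸ rfl)
  by_cases hJI' : J = -I
  · left
    simp only [CId, hJI', CI_neg]
  exact .inr fun q ⟨hqI, hqJ⟩ ℓ =>
    exists_eq_smul_one_of_mem_CI_of_mem_CI hI hJ (Ne.symm hJI)
      (fun h => hJI' (by rw [h, neg_neg])) (hqI ℓ) (hqJ ℓ)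

theorem sliceTop_isOpen_iff (n d : ℕ) (𝒞 : Set (EndE n)) (s : Set (Fin d → EndE n)) :
    IsOpen[sliceTop n d 𝒞] s ↔
      ∀ I ∈ 𝒞, ∃ U : Set (Fin d → EndE n), IsOpen U ∧ s ∩ CId n d I = U ∩ CId n d I := by
  rw [sliceTop, isOpen_iSup_iff]
  refine forall_congr' fun I => ?_
  rw [isOpen_iSup_iff]
  refine forall_congr' fun _ => ?_
  rw [isOpen_coinduced, isOpen_induced_iff]
  refine exists_congr fun U => and_congr_right fun _ => ?_
  rw [Subtype.preimage_coe_eq_preimage_coe_iff, Set.inter_comm s, Set.inter_comm U, eq_comm]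

theorem sliceTop_isOpen_of_inter_CId_eq_empty_or {n d : ℕ} {𝒞 : Set (EndE n)}
    {Ω s : Set (Fin d → EndE n)} (hΩ : SliceOpen n d 𝒞 Ω)
    (hs : ∀ J ∈ 𝒞, s ∩ CId n d J = ∅ ∨ s ∩ CId n d J = Ω ∩ CId n d J) :
    IsOpen[sliceTop n d 𝒞] s := by
  refine (sliceTop_isOpen_iff n d 𝒞 s).mpr fun J hJ => ?_
  rcases hs J hJ with h | h
  · exact ⟨∅, isOpen_empty, by rw [h, Set.empty_inter]⟩
  · rw [h]
    exact hΩ.2 J hJ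

theorem SliceDomain.subset_CId {n d : ℕ} {𝒞 : Set (EndE n)} {Ω : Set (Fin d → EndE n)}
    {I : EndE n} (hΩ : SliceDomain n d 𝒞 Ω) (hmeet : (Ω ∩ CId n d I).Nonempty)
    (hslices : ∀ J ∈ 𝒞, CId n d J = CId n d I ∨ Ω ∩ CId n d I ∩ CId n d J = ∅) :
    Ω ⊆ CId n d I := by
  have hin : IsOpen[sliceTop n d 𝒞] (Ω ∩ CId n d I) := by
    refine sliceTop_isOpen_of_inter_CId_eq_empty_or hΩ.1 fun J hJ => ?_
    rcases hslices J hJ with h | h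
    · exact .inr (by rw [h, Set.inter_assoc, Set.inter_self])
    · exact .inl h
  have hout : IsOpen[sliceTop n d 𝒞] (Ω \ CId n d I) := by
    refine sliceTop_isOpen_of_inter_CId_eq_empty_or hΩ.1 fun J hJ => ?_
    rcases hslices J hJ with h | h
    · exact .inl (by rw [h, Set.sdiff_inter_self])
    · refine .inr (Set.ext fun q => ⟨fun ⟨⟨hqΩ, _⟩, hqJ⟩ => ⟨hqΩ, hqJ⟩, fun ⟨hqΩ, hqJ⟩ => ?_⟩)
      exact ⟨⟨hqΩ, fun hqI => h.subset ⟨⟨hqΩ, hqI⟩, hqJ⟩⟩, hqJ⟩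
  have hcover : Ω ⊆ (Ω ∩ CId n d I) ∪ (Ω \ CId n d I) := by simp
  have hmeet' : (Ω ∩ (Ω ∩ CId n d I)).Nonempty := by rwa [← Set.inter_assoc, Set.inter_self]
  exact (@IsPreconnected.subset_left_of_subset_union _ (sliceTop n d 𝒞) _ _ _ hin hout
    Set.disjoint_sdiff_inter.symm hcover hmeet' hΩ.2.2).trans Set.inter_subset_right

theorem sliceDomain_subset_slice_of_no_reals_general (n d : ℕ)
    (𝒞 : Set (EndE n)) (hcs : 𝒞 ⊆ CS n)
    (Ω : Set (Fin d → EndE n)) (hΩ : SliceDomain n d 𝒞 Ω)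
    (hreal : Ω ∩ RealSet n d = ∅) :
    ∃ I ∈ 𝒞, Ω ⊆ CId n d I := by
  obtain ⟨q₀, hq₀⟩ := hΩ.2.1
  obtain ⟨I, hI, hq₀I⟩ : ∃ I ∈ 𝒞, q₀ ∈ CId n d I := by
    simpa [Wcone] using hΩ.1.1 hq₀
  refine ⟨I, hI, hΩ.subset_CId ⟨q₀, hq₀, hq₀I⟩ fun J hJ => ?_⟩
  refine (CId_eq_or_inter_subset_realSet n d (hcs hI) (hcs hJ)).imp_right fun hsub => ?_
  rw [← Set.subset_empty_iff, ← hreal, Set.inter_assoc]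
  exact Set.inter_subset_inter_right Ω hsub

/-- A real-connected slice-domain avoiding the reals lies in a single slice. -/
theorem sliceDomain_subset_slice_of_no_reals (n d : ℕ) (hn : 1 ≤ n) (hd : 1 ≤ d)
    (𝒞 : Set (EndE n)) (h𝒞 : 𝒞.Nonempty) (hsym : ∀ I ∈ 𝒞, -I ∈ 𝒞) (hcs : 𝒞 ⊆ CS n)
    (Ω : Set (Fin d → EndE n)) (hΩ : SliceDomain n d 𝒞 Ω) (hrc : RealConnected n d Ω)
    (hreal : Ω ∩ RealSet n d = ∅) :
    ∃ I ∈ 𝒞, Ω ⊆ CId n d I :=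
  sliceDomain_subset_slice_of_no_reals_general n d 𝒞 hcs Ω hΩ hreal
end
end

section
/- (Splitting Lemma) Let Ω be a slice-open set in W and f : Ω → ℝ^{2n}. Then f is weak slice regular if and only if for every I ∈ 𝒞 and every I-basis {ξ₁, …, ξ_n} of ℝ^{2n} there exist functions G₁, …, G_n : Φ_I⁻¹(Ω) → ℂ_I such that: each G_ℓ is Fréchet (real) differentiable on Φ_I⁻¹(Ω) and satisfies ∂G_ℓ/∂x_m + I ∘ (∂G_ℓ/∂y_m) = 0 on Φ_I⁻¹(Ω) for every m = 1, …, d (composition taken in End(ℝ^{2n})), and f(Φ_I(x,y)) = Σ_{ℓ=1}^n G_ℓ(x,y)(ξ_ℓ) for all (x,y) ∈ Φ_I⁻¹(Ω), where G_ℓ(x,y)(ξ_ℓ) denotes the operator G_ℓ(x,y) ∈ ℂ_I applied to the vector ξ_ℓ. -/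
/-! An `I`-basis `ξ` turns `ℝ^{2n}` into `ℂ_I^n`: writing `w = ∑ ℓ, (a_ℓ·id + b_ℓ·I) ξ_ℓ`, each
coordinate `w ↦ a_ℓ·id + b_ℓ·I` is real-linear and turns `I` into left multiplication by `I`.
Real-linear maps that intertwine the complex structures preserve the Cauchy–Riemann equations, so
the coordinates of a weak slice regular `f ∘ Φ_I` are holomorphic, and conversely
`∑ ℓ, G_ℓ(·) ξ_ℓ` is holomorphic whenever the `G_ℓ` are. An `I`-basis exists because `I` makes
`ℝ^{2n}` an `n`-dimensional complex vector space (a complex basis `b` gives the real basis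
`(b, I b)`). -/

noncomputable section

/-- Φ_I : ℝ^d × ℝ^d → [End(ℝ^{2n})]^d, (x, y) ↦ (x₁·id + y₁·I, …, x_d·id + y_d·I). -/
def Phi (n d : ℕ) (I : EndE n) : (Fin d → ℝ) × (Fin d → ℝ) → Fin d → EndE n :=
  fun p ℓ => p.1 ℓ • (1 : EndE n) + p.2 ℓ • I

/-- The standard basis direction in the x-coordinates. -/
def ex (d : ℕ) (ℓ : Fin d) : (Fin d → ℝ) × (Fin d → ℝ) := (Pi.single ℓ 1, 0)

/-- The standard basis direction in the y-coordinates. -/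
def ey (d : ℕ) (ℓ : Fin d) : (Fin d → ℝ) × (Fin d → ℝ) := (0, Pi.single ℓ 1)

/-- f is weak slice regular on Ω: for every I ∈ 𝒞, f ∘ Φ_I is (Fréchet, real)
differentiable on Φ_I⁻¹(Ω) and satisfies the Cauchy–Riemann equations
∂(f∘Φ_I)/∂x_ℓ + I(∂(f∘Φ_I)/∂y_ℓ) = 0 there, for ℓ = 1, …, d. -/
def WSRegular (n d : ℕ) (𝒞 : Set (EndE n)) (Ω : Set (Fin d → EndE n))
    (f : (Fin d → EndE n) → V n) : Prop :=
  ∀ I ∈ 𝒞, DifferentiableOn ℝ (f ∘ Phi n d I) (Phi n d I ⁻¹' Ω) ∧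
    ∀ p ∈ Phi n d I ⁻¹' Ω, ∀ ℓ : Fin d,
      fderiv ℝ (f ∘ Phi n d I) p (ex d ℓ) + I (fderiv ℝ (f ∘ Phi n d I) p (ey d ℓ)) = 0

section CauchyRiemann

variable {d : ℕ} {F F' : Type*} [NormedAddCommGroup F] [NormedSpace ℝ F]
  [NormedAddCommGroup F'] [NormedSpace ℝ F']

def CauchyRiemannOn (J : F →L[ℝ] F) (S : Set ((Fin d → ℝ) × (Fin d → ℝ)))
    (g : (Fin d → ℝ) × (Fin d → ℝ) → F) : Prop :=
  DifferentiableOn ℝ g S ∧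
    ∀ p ∈ S, ∀ m : Fin d, fderiv ℝ g p (ex d m) + J (fderiv ℝ g p (ey d m)) = 0

variable {J : F →L[ℝ] F} {J' : F' →L[ℝ] F'} {S : Set ((Fin d → ℝ) × (Fin d → ℝ))}

theorem CauchyRiemannOn.clm_comp {g : (Fin d → ℝ) × (Fin d → ℝ) → F}
    (hg : CauchyRiemannOn J S g) (hS : IsOpen S) (T : F →L[ℝ] F')
    (hT : ∀ w, T (J w) = J' (T w)) : CauchyRiemannOn J' S (T ∘ g) := by
  refine ⟨T.differentiable.comp_differentiableOn hg.1, fun p hp m => ?_⟩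
  have hgp := (hg.1 p hp).differentiableAt (hS.mem_nhds hp)
  rw [(T.hasFDerivAt.comp p hgp.hasFDerivAt).fderiv, ContinuousLinearMap.comp_apply,
    ContinuousLinearMap.comp_apply, ← hT, ← map_add, hg.2 p hp m, map_zero]

theorem CauchyRiemannOn.sum {ι : Type*} {s : Finset ι}
    {g : ι → (Fin d → ℝ) × (Fin d → ℝ) → F} (hS : IsOpen S)
    (hg : ∀ i ∈ s, CauchyRiemannOn J S (g i)) :
    CauchyRiemannOn J S (fun p => ∑ i ∈ s, g i p) := by
  refine ⟨DifferentiableOn.fun_sum fun i hi => (hg i hi).1, fun p hp m => ?_⟩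
  rw [fderiv_fun_sum fun i hi => ((hg i hi).1 p hp).differentiableAt (hS.mem_nhds hp),
    _root_.sum_apply, _root_.sum_apply, map_sum, ← Finset.sum_add_distrib]
  exact Finset.sum_eq_zero fun i hi => (hg i hi).2 p hp m

theorem CauchyRiemannOn.congr {g g' : (Fin d → ℝ) × (Fin d → ℝ) → F}
    (hg : CauchyRiemannOn J S g) (hS : IsOpen S) (hgg' : Set.EqOn g' g S) :
    CauchyRiemannOn J S g' := by
  refine ⟨hg.1.congr hgg', fun p hp m => ?_⟩
  rw [(Filter.eventuallyEq_of_mem (hS.mem_nhds hp) hgg').fderiv_eq]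
  exact hg.2 p hp m

end CauchyRiemann

section ComplexStructureBasis

variable {R E : Type*} [Ring R] [AddCommGroup E] [Module R E] {ι : Type*}
  {J : Module.End R E} {B : Module.Basis (ι ⊕ ι) R E}

theorem Module.Basis.coord_comp_complexStructure
    (hJ : ∀ v, J (J v) = -v) (hB : ∀ j, J (B (Sum.inl j)) = B (Sum.inr j)) (ℓ : ι) :
    B.coord (Sum.inl ℓ) ∘ₗ J = -B.coord (Sum.inr ℓ) ∧
      B.coord (Sum.inr ℓ) ∘ₗ J = B.coord (Sum.inl ℓ) := by
  have hJinr : ∀ j, J (B (Sum.inr j)) = -B (Sum.inl j) := fun j => by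
    rw [← hB, hJ]
  classical
  constructor <;> refine B.ext fun i => ?_ <;> rcases i with j | j <;>
    simp [hB, hJinr, Finsupp.single_apply]

end ComplexStructureBasis

section ComplexCoord

variable {E : Type*} [NormedAddCommGroup E] [NormedSpace ℝ E] [FiniteDimensional ℝ E]
  {ι : Type*} (B : Module.Basis (ι ⊕ ι) ℝ E) (J : E →L[ℝ] E)

def Module.Basis.complexCoord (ℓ : ι) : E →L[ℝ] E →L[ℝ] E :=
  (B.coord (Sum.inl ℓ)).toContinuousLinearMap.smulRight 1 +
    (B.coord (Sum.inr ℓ)).toContinuousLinearMap.smulRight J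

theorem Module.Basis.complexCoord_apply (ℓ : ι) (w : E) :
    B.complexCoord J ℓ w = B.coord (Sum.inl ℓ) w • (1 : E →L[ℝ] E) + B.coord (Sum.inr ℓ) w • J := by
  simp [Module.Basis.complexCoord]

variable {B J}

theorem Module.Basis.complexCoord_map_apply (hJ : J * J = -1)
    (hB : ∀ j, J (B (Sum.inl j)) = B (Sum.inr j)) (ℓ : ι) (w : E) :
    B.complexCoord J ℓ (J w) = J * B.complexCoord J ℓ w := by
  have hJv : ∀ v, J (J v) = -v := fun v => congr($hJ v)
  obtain ⟨hinl, hinr⟩ := B.coord_comp_complexStructure (J := J.toLinearMap) hJv hB ℓ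
  have hinl_w : B.coord (Sum.inl ℓ) (J w) = -B.coord (Sum.inr ℓ) w := LinearMap.congr_fun hinl w
  have hinr_w : B.coord (Sum.inr ℓ) (J w) = B.coord (Sum.inl ℓ) w := LinearMap.congr_fun hinr w
  rw [complexCoord_apply, complexCoord_apply, mul_add, mul_smul_comm, mul_smul_comm, hJ, mul_one,
    hinl_w, hinr_w, neg_smul, smul_neg, add_comm]

theorem Module.Basis.sum_complexCoord_apply [Fintype ι]
    (hB : ∀ j, J (B (Sum.inl j)) = B (Sum.inr j)) (w : E) :
    ∑ ℓ, B.complexCoord J ℓ w (B (Sum.inl ℓ)) = w := by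
  conv_rhs => rw [← B.sum_repr w, Fintype.sum_sum_type, ← Finset.sum_add_distrib]
  simp [complexCoord_apply, hB]

end ComplexCoord

theorem Module.End.exists_linearIndependent_sumElim_of_mul_self_eq_neg_one
    {E : Type*} [AddCommGroup E] [Module ℝ E] [FiniteDimensional ℝ E]
    {J : Module.End ℝ E} (hJ : J * J = -1) {n : ℕ} (hn : Module.finrank ℝ E = 2 * n) :
    ∃ ξ : Fin n → E, LinearIndependent ℝ (Sum.elim ξ fun j => J (ξ j)) ∧
      Submodule.span ℝ (Set.range (Sum.elim ξ fun j => J (ξ j))) = ⊤ := by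
  let _ : Module ℂ E := Module.compHom E (Complex.lift ⟨J, hJ⟩).toRingHom
  have smul_def : ∀ (z : ℂ) (v : E), z • v = z.re • v + z.im • J v := fun z v => by
    change Complex.lift ⟨J, hJ⟩ z v = _
    simp [Complex.lift_apply, Complex.liftAux_apply, Algebra.algebraMap_eq_smul_one]
  have : IsScalarTower ℝ ℂ E := ⟨fun r z v => by simp [smul_def, smul_add, smul_smul]⟩
  have : Module.Finite ℂ E := Module.Finite.of_restrictScalars_finite ℝ ℂ E
  have hrank : Module.finrank ℂ E = n := by
    have := Module.finrank_mul_finrank ℝ ℂ E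
    rw [Complex.finrank_real_complex, hn] at this
    omega
  let b := (Module.finBasis ℂ E).reindex (finCongr hrank)
  let e : Fin 2 × Fin n ≃ Fin n ⊕ Fin n :=
    (finTwoEquiv.prodCongr (Equiv.refl _)).trans (Equiv.boolProdEquivSum _)
  let B := (Complex.basisOneI.smulTower b).reindex e
  have hB : ⇑B = Sum.elim b fun j => J (b j) := by
    funext i
    rcases i with j | j <;> simp [B, e, finTwoEquiv, Module.Basis.smulTower_apply, smul_def]
  exact ⟨b, hB ▸ B.linearIndependent, hB ▸ B.span_eq⟩

section Phi

variable {n d : ℕ}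

theorem continuous_Phi (I : EndE n) : Continuous (Phi n d I) := by
  unfold Phi
  fun_prop

theorem Phi_mem_CId (I : EndE n) (p : (Fin d → ℝ) × (Fin d → ℝ)) : Phi n d I p ∈ CId n d I :=
  fun ℓ => ⟨p.1 ℓ, p.2 ℓ, rfl⟩

theorem SliceOpen.isOpen_preimage_Phi {𝒞 : Set (EndE n)} {Ω : Set (Fin d → EndE n)}
    (hΩ : SliceOpen n d 𝒞 Ω) {I : EndE n} (hI : I ∈ 𝒞) : IsOpen (Phi n d I ⁻¹' Ω) := by
  obtain ⟨U, hU, hΩU⟩ := hΩ.2 I hI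
  have hslice : Phi n d I ⁻¹' CId n d I = Set.univ := Set.eq_univ_of_forall (Phi_mem_CId I)
  have hpre : Phi n d I ⁻¹' Ω = Phi n d I ⁻¹' U := by
    rw [← Set.inter_univ (Phi n d I ⁻¹' Ω), ← hslice, ← Set.preimage_inter, hΩU,
      Set.preimage_inter, hslice, Set.inter_univ]
  exact hpre ▸ hU.preimage (continuous_Phi I)

end Phi

theorem wsRegular_iff_cauchyRiemannOn {n d : ℕ} {𝒞 : Set (EndE n)} {Ω : Set (Fin d → EndE n)}
    {f : (Fin d → EndE n) → V n} :
    WSRegular n d 𝒞 Ω f ↔ ∀ I ∈ 𝒞, CauchyRiemannOn I (Phi n d I ⁻¹' Ω) (f ∘ Phi n d I) :=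
  Iff.rfl

theorem splitting_lemma_general (n d : ℕ)
    (𝒞 : Set (EndE n)) (hcs : 𝒞 ⊆ CS n)
    (Ω : Set (Fin d → EndE n)) (hΩ : SliceOpen n d 𝒞 Ω)
    (f : (Fin d → EndE n) → V n) :
    WSRegular n d 𝒞 Ω f ↔
      ∀ I ∈ 𝒞, ∀ ξ : Fin n → V n,
        (LinearIndependent ℝ (Sum.elim ξ fun j => I (ξ j)) ∧
          Submodule.span ℝ (Set.range (Sum.elim ξ fun j => I (ξ j))) = ⊤) →
        ∃ G : Fin n → ((Fin d → ℝ) × (Fin d → ℝ)) → EndE n,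
          (∀ ℓ : Fin n, ∀ p ∈ Phi n d I ⁻¹' Ω, G ℓ p ∈ CI I) ∧
          (∀ ℓ : Fin n, DifferentiableOn ℝ (G ℓ) (Phi n d I ⁻¹' Ω)) ∧
          (∀ ℓ : Fin n, ∀ p ∈ Phi n d I ⁻¹' Ω, ∀ m : Fin d,
            fderiv ℝ (G ℓ) p (ex d m) + I * fderiv ℝ (G ℓ) p (ey d m) = 0) ∧
          (∀ p ∈ Phi n d I ⁻¹' Ω, f (Phi n d I p) = ∑ ℓ : Fin n, (G ℓ p) (ξ ℓ)) := by
  rw [wsRegular_iff_cauchyRiemannOn]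
  refine ⟨fun hreg I hI ξ ⟨hind, hspan⟩ => ?_, fun hsplit I hI => ?_⟩
  · let B := Module.Basis.mk hind hspan.ge
    have hB : ∀ j, I (B (Sum.inl j)) = B (Sum.inr j) := fun j => by simp [B]
    have hG : ∀ ℓ, CauchyRiemannOn (ContinuousLinearMap.compL ℝ (V n) (V n) (V n) I)
        (Phi n d I ⁻¹' Ω) (B.complexCoord I ℓ ∘ f ∘ Phi n d I) := fun ℓ =>
      (hreg I hI).clm_comp (hΩ.isOpen_preimage_Phi hI) _ (B.complexCoord_map_apply (hcs hI) hB ℓ)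
    refine ⟨fun ℓ => B.complexCoord I ℓ ∘ f ∘ Phi n d I,
      fun ℓ p _ => ⟨_, _, B.complexCoord_apply I ℓ _⟩, fun ℓ => (hG ℓ).1, fun ℓ => (hG ℓ).2,
      fun p _ => ?_⟩
    simpa [B] using (B.sum_complexCoord_apply hB (f (Phi n d I p))).symm
  · have hI2 : (I : Module.End ℝ (V n)) * I = -1 := LinearMap.ext fun v => congr($(hcs hI) v)
    obtain ⟨ξ, hξ⟩ := Module.End.exists_linearIndependent_sumElim_of_mul_self_eq_neg_one hI2
      (finrank_euclideanSpace_fin (n := 2 * n))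
    obtain ⟨G, -, hGdiff, hGCR, hGsum⟩ := hsplit I hI ξ hξ
    have hS := hΩ.isOpen_preimage_Phi hI
    refine (CauchyRiemannOn.sum hS fun ℓ _ => ?_).congr hS hGsum
    exact CauchyRiemannOn.clm_comp (J := ContinuousLinearMap.compL ℝ (V n) (V n) (V n) I)
      ⟨hGdiff ℓ, hGCR ℓ⟩ hS (ContinuousLinearMap.apply ℝ (V n) (ξ ℓ)) fun _ => rfl

/-- (Splitting Lemma) f is weak slice regular iff for every I ∈ 𝒞 and every I-basis
ξ₁, …, ξ_n of ℝ^{2n} there are ℂ_I-valued holomorphic components G₁, …, G_n with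
f ∘ Φ_I = Σ_ℓ G_ℓ(·)(ξ_ℓ) on Φ_I⁻¹(Ω). -/
theorem splitting_lemma (n d : ℕ) (hn : 1 ≤ n) (hd : 1 ≤ d)
    (𝒞 : Set (EndE n)) (h𝒞 : 𝒞.Nonempty) (hsym : ∀ I ∈ 𝒞, -I ∈ 𝒞) (hcs : 𝒞 ⊆ CS n)
    (Ω : Set (Fin d → EndE n)) (hΩ : SliceOpen n d 𝒞 Ω)
    (f : (Fin d → EndE n) → V n) :
    WSRegular n d 𝒞 Ω f ↔
      ∀ I ∈ 𝒞, ∀ ξ : Fin n → V n,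
        (LinearIndependent ℝ (Sum.elim ξ fun j => I (ξ j)) ∧
          Submodule.span ℝ (Set.range (Sum.elim ξ fun j => I (ξ j))) = ⊤) →
        ∃ G : Fin n → ((Fin d → ℝ) × (Fin d → ℝ)) → EndE n,
          (∀ ℓ : Fin n, ∀ p ∈ Phi n d I ⁻¹' Ω, G ℓ p ∈ CI I) ∧
          (∀ ℓ : Fin n, DifferentiableOn ℝ (G ℓ) (Phi n d I ⁻¹' Ω)) ∧
          (∀ ℓ : Fin n, ∀ p ∈ Phi n d I ⁻¹' Ω, ∀ m : Fin d,
            fderiv ℝ (G ℓ) p (ex d m) + I * fderiv ℝ (G ℓ) p (ey d m) = 0) ∧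
          (∀ p ∈ Phi n d I ⁻¹' Ω, f (Phi n d I p) = ∑ ℓ : Fin n, (G ℓ p) (ξ ℓ)) :=
  splitting_lemma_general n d 𝒞 hcs Ω hΩ f
end
end
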